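/- arXiv:2309.05584 — 3 statements merged into one kernel-verified Lean document; each statement's English description precedes it below -/
import Mathlib

section
/- Let X be a random variable taking finitely many values and α ∈ (0,1). Then min_{b ∈ ℝ} { b + (1/(1−α)) E([X − b]^+) } is attained, and the minimum value equals CVaR_α(X) := (1/(1−α)) ∫_α^1 VaR_ν(X) dν. -/
/-!
Let `F` be the cdf of `X` and `Q` its lower inverse, so that `VaR_ν = Q ν` and
`Q ν ≤ x ↔ ν ≤ F x` for `ν ∈ (0, 1]`. Taking `M ≥ X`, the layer-cake formula gives
`E[(X - b)⁺] = ∫_b^M (1 - F t) dt` for `b ≤ M`, so `(1 - α) b + E[(X - b)⁺]` is a constant plus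
`∫_b^M (α - F t) dt`, which is minimal at `b = Q α` because `α - F` changes sign there.
At `b = Q α`, apply the layer-cake formula to `Q` on `(α, 1]` as well: the set
`{ν ∈ (α, 1] | t < Q ν} = (F t, 1]` has length `1 - F t`, the tail of `X`, hence
`∫_α^1 (Q ν - Q α) dν = E[(X - Q α)⁺]`.
-/

open MeasureTheory ProbabilityTheory Set Filter

lemma integral_max_sub_eq_intervalIntegral_measureReal_lt {Ω : Type*} [MeasurableSpace Ω]
    {μ : Measure Ω} [IsFiniteMeasure μ] {f : Ω → ℝ} (hf : AEMeasurable f μ) {c M : ℝ}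
    (hM : ∀ᵐ ω ∂μ, f ω ≤ M) (hcM : c ≤ M) :
    ∫ ω, max (f ω - c) 0 ∂μ = ∫ t in c..M, μ.real {ω | t < f ω} := by
  have hint : Integrable (fun ω => max (f ω - c) 0) μ := by
    refine Integrable.of_bound ((hf.sub_const c).max aemeasurable_const).aestronglyMeasurable
      (M - c) ?_
    filter_upwards [hM] with ω hω
    rw [Real.norm_of_nonneg (le_max_right _ _)]
    exact max_le (by linarith) (by linarith)
  have hlevel : ∀ t > 0, {ω | t < max (f ω - c) 0} = {ω | c + t < f ω} := by
    intro t ht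
    ext ω
    simp only [mem_ofPred_eq, lt_max_iff, ht.not_gt, or_false]
    constructor <;> intro h <;> linarith
  have htail : ∀ t ∈ Ioi (0 : ℝ) \ Ioc 0 (M - c), μ.real {ω | t < max (f ω - c) 0} = 0 := by
    intro t ht
    have htM : M < c + t := by linarith [not_and.1 ht.2 ht.1]
    rw [hlevel t ht.1, measureReal_eq_zero_iff]
    exact measure_mono_null (fun ω (hω : c + t < f ω) => not_le.2 (htM.trans hω)) (ae_iff.1 hM)
  calc ∫ ω, max (f ω - c) 0 ∂μ
      = ∫ t in Ioi 0, μ.real {ω | t < max (f ω - c) 0} :=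
        hint.integral_eq_integral_meas_lt (Eventually.of_forall fun ω => le_max_right _ _)
    _ = ∫ t in Ioc 0 (M - c), μ.real {ω | t < max (f ω - c) 0} :=
        setIntegral_eq_of_subset_of_ae_sdiff_eq_zero measurableSet_Ioi.nullMeasurableSet
          Ioc_subset_Ioi_self (Eventually.of_forall htail)
    _ = ∫ t in (0)..(M - c), μ.real {ω | c + t < f ω} := by
        rw [intervalIntegral.integral_of_le (by linarith)]
        exact setIntegral_congr_fun measurableSet_Ioc fun t ht => by rw [hlevel t ht.1]
    _ = ∫ t in c..M, μ.real {ω | t < f ω} := by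
        rw [intervalIntegral.integral_comp_add_left (fun t => μ.real {ω | t < f ω}), add_zero,
          add_sub_cancel]

namespace ProbabilityTheory

/-- `VaR_ν`. The `sInf` is a junk value for `ν ≤ 0`, and for `ν > 1` or an unbounded `ρ`
also at `ν = 1`. -/
noncomputable def quantile (ρ : Measure ℝ) (ν : ℝ) : ℝ := sInf {x | ν ≤ cdf ρ x}

/-- `(1 - α)` times the objective `b + (1 - α)⁻¹ E[(X - b)⁺]`, for `X` with law `ρ`. -/
noncomputable def rockafellarUryasev (ρ : Measure ℝ) (α b : ℝ) : ℝ :=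
  (1 - α) * b + ∫ x, max (x - b) 0 ∂ρ

variable {ρ : Measure ℝ}

lemma cdf_map {Ω : Type*} [MeasurableSpace Ω] {μ : Measure Ω} [IsProbabilityMeasure μ]
    {X : Ω → ℝ} (hX : Measurable X) (x : ℝ) : cdf (μ.map X) x = (μ {ω | X ω ≤ x}).toReal := by
  have := Measure.isProbabilityMeasure_map (μ := μ) hX.aemeasurable
  rw [cdf_eq_real, measureReal_def, Measure.map_apply hX measurableSet_Iic]
  rfl

lemma cdf_eq_one_of_ae_le [IsProbabilityMeasure ρ] {M : ℝ} (hM : ∀ᵐ x ∂ρ, x ≤ M) :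
    cdf ρ M = 1 := by
  have h : ρ (Iic M) = 1 := by
    rw [← measure_univ (μ := ρ)]
    exact (ae_iff_measure_eq measurableSet_Iic.nullMeasurableSet).1 hM
  rw [cdf_eq_real, measureReal_def, h, ENNReal.toReal_one]

lemma exists_le_cdf_of_ae_le [IsProbabilityMeasure ρ] {M ν : ℝ} (hM : ∀ᵐ x ∂ρ, x ≤ M)
    (hν : ν ≤ 1) : ∃ y, ν ≤ cdf ρ y :=
  ⟨M, hν.trans (cdf_eq_one_of_ae_le hM).ge⟩

lemma quantile_le_iff {ν : ℝ} (hν : 0 < ν) (hne : ∃ y, ν ≤ cdf ρ y) (x : ℝ) :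
    quantile ρ ν ≤ x ↔ ν ≤ cdf ρ x := by
  set s := {x | ν ≤ cdf ρ x}
  obtain ⟨y₀, hy₀⟩ := eventually_atBot.1 ((tendsto_cdf_atBot ρ).eventually (gt_mem_nhds hν))
  have hbdd : BddBelow s := ⟨y₀, fun y hy => le_of_not_gt fun hlt => (hy₀ y hlt.le).not_ge hy⟩
  -- right continuity of the cdf puts the infimum in `s`
  have hmem : ν ≤ cdf ρ (quantile ρ ν) := by
    refine ge_of_tendsto (((cdf ρ).right_continuous _).mono Ioi_subset_Ici_self)
      (eventually_nhdsWithin_of_forall fun x hx => ?_)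
    obtain ⟨y, hys, hyx⟩ := exists_lt_of_csInf_lt hne hx
    exact le_trans hys (monotone_cdf ρ hyx.le)
  exact ⟨fun h => hmem.trans (monotone_cdf ρ h), fun h => csInf_le hbdd h⟩

lemma lt_quantile_iff {ν : ℝ} (hν : 0 < ν) (hne : ∃ y, ν ≤ cdf ρ y) (x : ℝ) :
    x < quantile ρ ν ↔ cdf ρ x < ν := by
  simpa only [not_le] using (quantile_le_iff hν hne x).not

lemma quantile_le_of_ae_le [IsProbabilityMeasure ρ] {M ν : ℝ} (hM : ∀ᵐ x ∂ρ, x ≤ M)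
    (hν : ν ∈ Ioc 0 1) : quantile ρ ν ≤ M :=
  (quantile_le_iff hν.1 (exists_le_cdf_of_ae_le hM hν.2) M).2
    (hν.2.trans (cdf_eq_one_of_ae_le hM).ge)

lemma monotoneOn_quantile [IsProbabilityMeasure ρ] {M : ℝ} (hM : ∀ᵐ x ∂ρ, x ≤ M) :
    MonotoneOn (quantile ρ) (Ioc 0 1) := by
  intro ν hν ν' hν' hle
  rw [quantile_le_iff hν.1 (exists_le_cdf_of_ae_le hM hν.2)]
  exact hle.trans ((quantile_le_iff hν'.1 (exists_le_cdf_of_ae_le hM hν'.2) _).1 le_rfl)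

lemma integral_max_sub_eq_intervalIntegral_one_sub_cdf [IsProbabilityMeasure ρ] {b M : ℝ}
    (hM : ∀ᵐ x ∂ρ, x ≤ M) (hbM : b ≤ M) :
    ∫ x, max (x - b) 0 ∂ρ = ∫ t in b..M, (1 - cdf ρ t) := by
  refine (integral_max_sub_eq_intervalIntegral_measureReal_lt (f := id) aemeasurable_id hM
    hbM).trans ?_
  congr 1 with t
  rw [cdf_eq_real, ← probReal_compl_eq_one_sub measurableSet_Iic, compl_Iic]
  rfl

lemma integral_sub_cdf_to_quantile_nonneg [IsProbabilityMeasure ρ] {M α : ℝ}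
    (hM : ∀ᵐ x ∂ρ, x ≤ M) (hα : α ∈ Ioo 0 1) (b : ℝ) :
    0 ≤ ∫ t in b..quantile ρ α, (α - cdf ρ t) := by
  have hne := exists_le_cdf_of_ae_le hM hα.2.le
  rcases le_total b (quantile ρ α) with hb | hb
  · refine intervalIntegral.integral_nonneg_of_ae_restrict hb ?_
    filter_upwards [ae_restrict_mem measurableSet_Icc,
      ae_restrict_of_ae (Measure.ae_ne volume (quantile ρ α))] with t ht htq
    exact sub_nonneg.2 ((lt_quantile_iff hα.1 hne t).1 (lt_of_le_of_ne ht.2 htq)).le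
  · rw [intervalIntegral.integral_symm, ← intervalIntegral.integral_neg]
    refine intervalIntegral.integral_nonneg hb fun t ht => ?_
    linarith [(quantile_le_iff hα.1 hne t).1 ht.1]

theorem rockafellarUryasev_quantile_le [IsProbabilityMeasure ρ] {M α : ℝ}
    (hM : ∀ᵐ x ∂ρ, x ≤ M) (hα : α ∈ Ioo 0 1) (b : ℝ) :
    rockafellarUryasev ρ α (quantile ρ α) ≤ rockafellarUryasev ρ α b := by
  set q := quantile ρ α
  set M' := max M (max b q)
  have hM' : ∀ᵐ x ∂ρ, x ≤ M' := by
    filter_upwards [hM] with x hx using hx.trans (le_max_left _ _)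
  have hint : ∀ a c, IntervalIntegrable (fun t => α - cdf ρ t) volume a c := fun a c =>
    Antitone.intervalIntegrable fun x y hxy => sub_le_sub_left (monotone_cdf ρ hxy) α
  have hrepr : ∀ c ≤ M',
      rockafellarUryasev ρ α c = (1 - α) * M' + ∫ t in c..M', (α - cdf ρ t) := by
    intro c hc
    have hsplit : ∫ t in c..M', (1 - cdf ρ t)
        = (∫ t in c..M', (α - cdf ρ t)) + (M' - c) * (1 - α) := by
      calc ∫ t in c..M', (1 - cdf ρ t) = ∫ t in c..M', ((α - cdf ρ t) + (1 - α)) := by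
            congr 1 with t; ring
        _ = _ := by
            rw [intervalIntegral.integral_add (hint c M') intervalIntegrable_const,
              intervalIntegral.integral_const, smul_eq_mul]
    rw [rockafellarUryasev, integral_max_sub_eq_intervalIntegral_one_sub_cdf hM' hc, hsplit]
    ring
  rw [hrepr q ((le_max_right _ _).trans (le_max_right _ _)),
    hrepr b ((le_max_left _ _).trans (le_max_right _ _)),
    ← intervalIntegral.integral_add_adjacent_intervals (hint b q) (hint q M')]
  linarith [integral_sub_cdf_to_quantile_nonneg hM hα b]

lemma measureReal_restrict_Ioc_lt_quantile [IsProbabilityMeasure ρ] {M α t : ℝ}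
    (hM : ∀ᵐ x ∂ρ, x ≤ M) (hα : α ∈ Ioo 0 1) (ht : quantile ρ α ≤ t) :
    (volume.restrict (Ioc α 1)).real {ν | t < quantile ρ ν} = 1 - cdf ρ t := by
  have hαt : α ≤ cdf ρ t := (quantile_le_iff hα.1 (exists_le_cdf_of_ae_le hM hα.2.le) t).1 ht
  have hset : {ν | t < quantile ρ ν} ∩ Ioc α 1 = Ioc (cdf ρ t) 1 := by
    ext ν
    constructor
    · rintro ⟨hν, hαν, hν1⟩
      exact ⟨(lt_quantile_iff (hα.1.trans hαν) (exists_le_cdf_of_ae_le hM hν1) t).1 hν, hν1⟩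
    · rintro ⟨htν, hν1⟩
      have hαν : α < ν := hαt.trans_lt htν
      exact ⟨(lt_quantile_iff (hα.1.trans hαν) (exists_le_cdf_of_ae_le hM hν1) t).2 htν,
        hαν, hν1⟩
  rw [measureReal_restrict_apply' measurableSet_Ioc, hset,
    Real.volume_real_Ioc_of_le (cdf_le_one ρ t)]

theorem rockafellarUryasev_quantile [IsProbabilityMeasure ρ] {M α : ℝ} (hM : ∀ᵐ x ∂ρ, x ≤ M)
    (hα : α ∈ Ioo 0 1) :
    rockafellarUryasev ρ α (quantile ρ α) = ∫ ν in α..1, quantile ρ ν := by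
  set q := quantile ρ α
  have hmono : MonotoneOn (quantile ρ) (Icc α 1) :=
    (monotoneOn_quantile hM).mono fun ν hν => ⟨hα.1.trans_le hν.1, hν.2⟩
  have hqM : q ≤ M := quantile_le_of_ae_le hM ⟨hα.1, hα.2.le⟩
  have hQM : ∀ᵐ ν ∂(volume.restrict (Ioc α 1)), quantile ρ ν ≤ M :=
    ae_restrict_of_forall_mem measurableSet_Ioc fun ν hν =>
      quantile_le_of_ae_le hM ⟨hα.1.trans hν.1, hν.2⟩
  have hQint : IntervalIntegrable (quantile ρ) volume α 1 :=
    MonotoneOn.intervalIntegrable (by rwa [uIcc_of_le hα.2.le])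
  have htail : ∫ ν in α..1, (quantile ρ ν - q) = ∫ x, max (x - q) 0 ∂ρ := by
    calc ∫ ν in α..1, (quantile ρ ν - q)
        = ∫ ν in Ioc α 1, max (quantile ρ ν - q) 0 := by
          rw [intervalIntegral.integral_of_le hα.2.le]
          refine setIntegral_congr_fun measurableSet_Ioc fun ν hν => (max_eq_left ?_).symm
          exact sub_nonneg.2 (hmono ⟨le_rfl, hα.2.le⟩ (Ioc_subset_Icc_self hν) hν.1.le)
      _ = ∫ t in q..M, (volume.restrict (Ioc α 1)).real {ν | t < quantile ρ ν} :=
          integral_max_sub_eq_intervalIntegral_measureReal_lt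
            (aemeasurable_restrict_of_monotoneOn measurableSet_Ioc
              (hmono.mono Ioc_subset_Icc_self)) hQM hqM
      _ = ∫ t in q..M, (1 - cdf ρ t) := by
          refine intervalIntegral.integral_congr fun t ht => ?_
          rw [uIcc_of_le hqM] at ht
          exact measureReal_restrict_Ioc_lt_quantile hM hα ht.1
      _ = ∫ x, max (x - q) 0 ∂ρ := (integral_max_sub_eq_intervalIntegral_one_sub_cdf hM hqM).symm
  rw [rockafellarUryasev, ← htail, intervalIntegral.integral_sub hQint intervalIntegrable_const,
    intervalIntegral.integral_const, smul_eq_mul]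
  ring

end ProbabilityTheory

/-- Rockafellar–Uryasev dual representation of `CVaR` for simple random variables:
the minimum of `b ↦ b + (1/(1-α)) E[(X-b)⁺]` over `b ∈ ℝ` is attained and equals
`CVaR_α(X) = (1/(1-α)) ∫_α^1 VaR_ν(X) dν`. -/
theorem cvar_dual_representation {Ω : Type*} [MeasurableSpace Ω]
    (μ : Measure Ω) [IsProbabilityMeasure μ] (X : Ω → ℝ)
    (hm : Measurable X) (hfin : (Set.range X).Finite)
    (VaR : ℝ → ℝ) (hVaR : ∀ ν, VaR ν = sInf {x : ℝ | (μ {ω | X ω ≤ x}).toReal ≥ ν})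
    (α : ℝ) (hα : α ∈ Set.Ioo (0 : ℝ) 1)
    (g : ℝ → ℝ) (hg : ∀ b, g b = b + (1 / (1 - α)) * ∫ ω, max (X ω - b) 0 ∂μ) :
    ∃ b0 : ℝ, (∀ b, g b0 ≤ g b) ∧
      g b0 = (1 / (1 - α)) * (∫ ν in α..1, VaR ν) := by
  have := Measure.isProbabilityMeasure_map (μ := μ) hm.aemeasurable
  obtain ⟨M, hM⟩ := hfin.bddAbove
  have hMρ : ∀ᵐ x ∂μ.map X, x ≤ M := (ae_map_iff hm.aemeasurable measurableSet_Iic).2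
    (Eventually.of_forall fun ω => hM ⟨ω, rfl⟩)
  have hVaR' : VaR = quantile (μ.map X) := funext fun ν => by
    simp only [hVaR, quantile, cdf_map hm, ge_iff_le]
  have hg' : ∀ b, g b = (1 - α)⁻¹ * rockafellarUryasev (μ.map X) α b := fun b => by
    have h1α : 1 - α ≠ 0 := (sub_pos.2 hα.2).ne'
    rw [hg, rockafellarUryasev, integral_map hm.aemeasurable (by fun_prop)]
    field_simp
  refine ⟨quantile (μ.map X) α, fun b => ?_, ?_⟩
  · rw [hg', hg']
    exact mul_le_mul_of_nonneg_left (rockafellarUryasev_quantile_le hMρ hα b)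
      (inv_nonneg.2 (sub_nonneg.2 hα.2.le))
  · rw [hg', rockafellarUryasev_quantile hMρ hα, hVaR', one_div]
end

section
/- Let X be a bounded random variable, α ∈ (0,1), and g(b) := b + (1/(1−α)) E([X − b]^+). Then b* := VaR_α(X) is a minimizer of g over ℝ. -/
/-!
Write `φ b = E[(X - b)⁺]` and `F` for the distribution function of `X`. Pointwise,
`(x - b)⁺ - (x - c)⁺ ≥ (c - b) 𝟙{x > c}`, so `φ b ≥ φ c + (c - b) P(X > c)` for all `b, c`.
For the quantile `q`, right-continuity of `F` gives `P(X > q) = 1 - F q ≤ 1 - α`, which settles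
`b ≥ q`; for `c < q` we have `F c < α`, i.e. `P(X > c) > 1 - α`, and letting `c ↑ q` settles
`b < q`. Hence `φ b - φ q ≥ (q - b)(1 - α)` for every `b`, which is `g q ≤ g b`.
-/

open MeasureTheory ProbabilityTheory Filter Topology Set

theorem isGLB_csInf_setOf_le_of_tendsto {F : ℝ → ℝ} {l u a : ℝ}
    (hbot : Tendsto F atBot (𝓝 l)) (htop : Tendsto F atTop (𝓝 u)) (hla : l < a) (hau : a < u) :
    IsGLB {x | a ≤ F x} (sInf {x | a ≤ F x}) := by
  have hne : {x | a ≤ F x}.Nonempty := (htop.eventually (eventually_ge_nhds hau)).exists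
  obtain ⟨m, hbelow⟩ := eventually_atBot.1 (hbot.eventually (eventually_lt_nhds hla))
  exact isGLB_csInf hne ⟨m, fun x hx => le_of_not_gt fun hxm => (hbelow x hxm.le).not_ge hx⟩

theorem le_apply_of_isGLB_setOf_le {α β : Type*} [LinearOrder α] [TopologicalSpace α]
    [OrderTopology α] [DenselyOrdered α] [NoMaxOrder α] [Preorder β] [TopologicalSpace β]
    [ClosedIciTopology β] {F : α → β} (hF : Monotone F) {a : β} {q : α}
    (hq : IsGLB {x | a ≤ F x} q) (hcont : ContinuousWithinAt F (Ici q) q) : a ≤ F q := by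
  have hright : ∀ᶠ x in 𝓝[>] q, a ≤ F x := by
    filter_upwards [self_mem_nhdsWithin] with x hx
    obtain ⟨s, hs, -, hsx⟩ := hq.exists_between hx
    exact hs.trans (hF hsx.le)
  exact ge_of_tendsto (hcont.mono_left (nhdsWithin_mono _ Ioi_subset_Ici_self)) hright

theorem indicator_Ioi_le_max_sub_max (b c x : ℝ) :
    (Ioi c).indicator (fun _ => c - b) x ≤ max (x - b) 0 - max (x - c) 0 := by
  by_cases hx : x ∈ Ioi c
  · rw [indicator_of_mem hx, max_eq_left (a := x - c) (sub_nonneg.2 (le_of_lt hx))]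
    linarith [le_max_left (x - b) 0]
  · rw [indicator_of_notMem hx, max_eq_right (a := x - c) (sub_nonpos.2 (not_lt.1 hx))]
    linarith [le_max_right (x - b) 0]

section Hinge

variable {Ω : Type*} [MeasurableSpace Ω] {μ : Measure Ω} {X : Ω → ℝ}

theorem sub_mul_measureReal_lt_le_integral_sub [IsFiniteMeasure μ] (hm : Measurable X)
    (hi : Integrable X μ) (b c : ℝ) :
    (c - b) * μ.real {ω | c < X ω} ≤
      (∫ ω, max (X ω - b) 0 ∂μ) - ∫ ω, max (X ω - c) 0 ∂μ := by
  have hint : ∀ d, Integrable (fun ω => max (X ω - d) 0) μ :=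
    fun d => (hi.sub (integrable_const d)).pos_part
  have hmeas : MeasurableSet {ω | c < X ω} := hm measurableSet_Ioi
  calc (c - b) * μ.real {ω | c < X ω}
      = ∫ ω, {ω | c < X ω}.indicator (fun _ => c - b) ω ∂μ := by
        rw [integral_indicator_const _ hmeas, smul_eq_mul, mul_comm]
    _ ≤ ∫ ω, (max (X ω - b) 0 - max (X ω - c) 0) ∂μ :=
        integral_mono ((integrable_const _).indicator hmeas) ((hint b).sub (hint c))
          fun ω => indicator_Ioi_le_max_sub_max b c (X ω)
    _ = _ := integral_sub (hint b) (hint c)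

theorem sub_mul_le_integral_sub_of_measureReal_lt [IsFiniteMeasure μ] (hm : Measurable X)
    (hi : Integrable X μ) {q k : ℝ} (htail : μ.real {ω | q < X ω} ≤ k)
    (htail_lt : ∀ c < q, k ≤ μ.real {ω | c < X ω}) (b : ℝ) :
    (q - b) * k ≤ (∫ ω, max (X ω - b) 0 ∂μ) - ∫ ω, max (X ω - q) 0 ∂μ := by
  set φ : ℝ → ℝ := fun d => ∫ ω, max (X ω - d) 0 ∂μ
  have hsub := sub_mul_measureReal_lt_le_integral_sub hm hi
  rcases le_or_gt q b with hqb | hbq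
  · calc (q - b) * k ≤ (q - b) * μ.real {ω | q < X ω} :=
          mul_le_mul_of_nonpos_left htail (sub_nonpos.2 hqb)
      _ ≤ φ b - φ q := hsub b q
  · have hbelow : ∀ c ∈ Ioo b q, (c - b) * k ≤ φ b - φ q := by
      rintro c ⟨hbc, hcq⟩
      have hφ : φ q ≤ φ c := by
        nlinarith [hsub c q, measureReal_nonneg (μ := μ) (s := {ω | q < X ω})]
      calc (c - b) * k ≤ (c - b) * μ.real {ω | c < X ω} :=
            mul_le_mul_of_nonneg_left (htail_lt c hcq) (sub_nonneg.2 hbc.le)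
        _ ≤ φ b - φ c := hsub b c
        _ ≤ φ b - φ q := by linarith
    have hlim : Tendsto (fun c => (c - b) * k) (𝓝[<] q) (𝓝 ((q - b) * k)) :=
      tendsto_nhdsWithin_of_tendsto_nhds ((continuous_id.sub continuous_const).mul
        continuous_const).continuousAt.tendsto
    exact le_of_tendsto hlim (eventually_of_mem (Ioo_mem_nhdsLT hbq) hbelow)

theorem cdf_map_eq_measureReal [IsProbabilityMeasure μ] (hm : Measurable X) (x : ℝ) :
    cdf (μ.map X) x = μ.real {ω | X ω ≤ x} := by
  have := Measure.isProbabilityMeasure_map (μ := μ) hm.aemeasurable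
  rw [cdf_eq_real, map_measureReal_apply hm measurableSet_Iic]
  rfl

theorem measureReal_lt_eq_one_sub_cdf_map [IsProbabilityMeasure μ] (hm : Measurable X)
    (x : ℝ) : μ.real {ω | x < X ω} = 1 - cdf (μ.map X) x := by
  rw [cdf_map_eq_measureReal hm,
    ← probReal_compl_eq_one_sub (s := {ω | X ω ≤ x}) (hm measurableSet_Iic)]
  congr 1
  ext ω
  simp

end Hinge

/-- `b* = VaR_α(X)` minimizes the Rockafellar–Uryasev dual objective
`g b = b + (1/(1-α)) E[(X-b)⁺]` over `ℝ`, for a bounded random variable `X`. -/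
theorem var_minimizes_cvar_dual {Ω : Type*} [MeasurableSpace Ω]
    (μ : Measure Ω) [IsProbabilityMeasure μ] (X : Ω → ℝ)
    (hm : Measurable X) (hX : ∃ C, ∀ ω, |X ω| ≤ C)
    (α : ℝ) (hα : α ∈ Set.Ioo (0 : ℝ) 1)
    (g : ℝ → ℝ) (hg : ∀ b, g b = b + (1 / (1 - α)) * ∫ ω, max (X ω - b) 0 ∂μ) :
    ∀ b : ℝ, g (sInf {x : ℝ | (μ {ω | X ω ≤ x}).toReal ≥ α}) ≤ g b := by
  obtain ⟨hα0, hα1⟩ := hα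
  obtain ⟨C, hC⟩ := hX
  have hi : Integrable X μ := .of_bound hm.aestronglyMeasurable C (.of_forall hC)
  set F := cdf (μ.map X)
  have hS : {x : ℝ | (μ {ω | X ω ≤ x}).toReal ≥ α} = {x | α ≤ F x} := by
    ext x
    simp only [F, cdf_map_eq_measureReal hm]
    rfl
  rw [hS]
  set q := sInf {x | α ≤ F x}
  have hq : IsGLB {x | α ≤ F x} q :=
    isGLB_csInf_setOf_le_of_tendsto (tendsto_cdf_atBot _) (tendsto_cdf_atTop _) hα0 hα1
  have hFq : α ≤ F q := le_apply_of_isGLB_setOf_le F.mono hq (F.right_continuous q)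
  have hFlt : ∀ c < q, F c < α := fun c hc => not_le.1 fun h => hc.not_ge (hq.1 h)
  have hgap := sub_mul_le_integral_sub_of_measureReal_lt hm hi (q := q) (k := 1 - α)
    (by rw [measureReal_lt_eq_one_sub_cdf_map hm]; linarith)
    (fun c hc => by rw [measureReal_lt_eq_one_sub_cdf_map hm]; linarith [hFlt c hc])
  intro b
  have h1α : 0 < 1 - α := sub_pos.2 hα1
  rw [hg, hg, ← sub_nonneg]
  calc (0 : ℝ) ≤ (1 / (1 - α)) * ((∫ ω, max (X ω - b) 0 ∂μ) - (∫ ω, max (X ω - q) 0 ∂μ)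
        - (q - b) * (1 - α)) := mul_nonneg (by positivity) (sub_nonneg.2 (hgap b))
    _ = _ := by field_simp; ring
end

section
/- Fix α ∈ (0,1) and a finite set Π of bounded random variables. For ς > 0 define approximate values v_ς(X) := min_{b ∈ B_ς} { b + (1/(1−α)) E([X − b]^+) }, where B_ς := {Vmin + kς : k ∈ ℕ, Vmin + kς ≤ Vmax} and all X ∈ Π take values in [Vmin, Vmax]. Then for every X ∈ Π, 0 ≤ v_ς(X) − CVaR_α(X) ≤ ς · max(1, α/(1−α)); hence as ς → 0, the minimizer over Π of v_ς converges to achieving the minimum of CVaR_α over Π up to O(ς). -/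
open MeasureTheory

/-!
Let `b₀ ∈ [Vmin, Vmax]` minimise the dual objective `g X`, so `g X b₀ = CVaR X`. The grid
contains a point `b ∈ (b₀ - ς, b₀]`, and since `(x - b)⁺ ≤ (x - b₀)⁺ + (b₀ - b)`, moving the
slack variable down by `b₀ - b` raises `g X` by at most `(1/(1-α) - 1)(b₀ - b) ≤ α/(1-α) · ς`.
The grid minimum lies between the global minimum `CVaR X` and `g X b`.
-/

theorem csInf_image_mem_Icc {ι β : Type*} [ConditionallyCompleteLattice β] {f : ι → β}
    {s : Set ι} {a : ι} {m : β} (ha : a ∈ s) (hm : ∀ x ∈ s, m ≤ f x) : sInf (f '' s) ∈ Set.Icc m (f a) :=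
  ⟨le_csInf ⟨f a, Set.mem_image_of_mem f ha⟩ (Set.forall_mem_image.2 hm),
    csInf_le ⟨m, Set.forall_mem_image.2 hm⟩ (Set.mem_image_of_mem f ha)⟩

theorem exists_nat_add_mul_mem_Ioc {a x ς : ℝ} (hς : 0 < ς) (hax : a ≤ x) :
    ∃ k : ℕ, a + k * ς ∈ Set.Ioc (x - ς) x := by
  have hq : 0 ≤ (x - a) / ς := div_nonneg (sub_nonneg.2 hax) hς.le
  refine ⟨⌊(x - a) / ς⌋₊, ?_, ?_⟩
  · have := mul_lt_mul_of_pos_right (Nat.sub_one_lt_floor ((x - a) / ς)) hς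
    rw [sub_mul, div_mul_cancel₀ _ hς.ne', one_mul] at this
    linarith
  · have := mul_le_mul_of_nonneg_right (Nat.floor_le hq) hς.le
    rw [div_mul_cancel₀ _ hς.ne'] at this
    linarith

theorem max_sub_zero_le_add {x b b₀ : ℝ} (hb : b ≤ b₀) :
    max (x - b) 0 ≤ max (x - b₀) 0 + (b₀ - b) :=
  max_le (by linarith [le_max_left (x - b₀) 0]) (by linarith [le_max_right (x - b₀) 0])

section CVaRDual

variable {Ω : Type*} [MeasurableSpace Ω] (μ : Measure Ω)

noncomputable def cvarDual (α : ℝ) (X : Ω → ℝ) (b : ℝ) : ℝ :=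
  b + (1 / (1 - α)) * ∫ ω, max (X ω - b) 0 ∂μ

variable {μ} [IsProbabilityMeasure μ]

theorem integral_max_sub_zero_le_add {X : Ω → ℝ} {b b₀ : ℝ} (hb : b ≤ b₀)
    (hX : Integrable (fun ω => max (X ω - b₀) 0) μ) :
    ∫ ω, max (X ω - b) 0 ∂μ ≤ (∫ ω, max (X ω - b₀) 0 ∂μ) + (b₀ - b) := by
  calc ∫ ω, max (X ω - b) 0 ∂μ
      ≤ ∫ ω, (max (X ω - b₀) 0 + (b₀ - b)) ∂μ :=
        integral_mono_of_nonneg (.of_forall fun _ => le_max_right _ _)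
          (hX.add (integrable_const _)) (.of_forall fun _ => max_sub_zero_le_add hb)
    _ = (∫ ω, max (X ω - b₀) 0 ∂μ) + (b₀ - b) := by
        rw [integral_add hX (integrable_const _), integral_const, probReal_univ, one_smul]

theorem cvarDual_le_add {α : ℝ} (hα : α < 1) {X : Ω → ℝ} {b b₀ : ℝ} (hb : b ≤ b₀)
    (hX : Integrable (fun ω => max (X ω - b₀) 0) μ) :
    cvarDual μ α X b ≤ cvarDual μ α X b₀ + α / (1 - α) * (b₀ - b) := by
  have hα' : 0 < 1 - α := sub_pos.2 hα
  calc cvarDual μ α X b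
      ≤ b + (1 / (1 - α)) * ((∫ ω, max (X ω - b₀) 0 ∂μ) + (b₀ - b)) := by
        unfold cvarDual
        gcongr
        exact integral_max_sub_zero_le_add hb hX
    _ = cvarDual μ α X b₀ + α / (1 - α) * (b₀ - b) := by
        unfold cvarDual
        field_simp
        ring

end CVaRDual

theorem grid_cvar_error_general {Ω : Type*} [MeasurableSpace Ω]
    (μ : Measure Ω) [IsProbabilityMeasure μ]
    (α : ℝ) (hα : α ∈ Set.Ioo (0 : ℝ) 1)
    (Vmin Vmax ς : ℝ) (hς : 0 < ς)
    (P : Set (Ω → ℝ))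
    (hmeas : ∀ X ∈ P, Measurable X)
    (hbound : ∀ X ∈ P, ∀ ω, X ω ∈ Set.Icc Vmin Vmax)
    (g : (Ω → ℝ) → ℝ → ℝ)
    (hg : ∀ X b, g X b = b + (1 / (1 - α)) * ∫ ω, max (X ω - b) 0 ∂μ)
    (CVaR : (Ω → ℝ) → ℝ)
    (hdual : ∀ X ∈ P, ∃ b ∈ Set.Icc Vmin Vmax,
        g X b = CVaR X ∧ ∀ b' : ℝ, g X b ≤ g X b')
    (v : (Ω → ℝ) → ℝ)
    (hv : ∀ X, v X = sInf (g X '' {b : ℝ | ∃ k : ℕ, b = Vmin + k * ς ∧ b ≤ Vmax})) :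
    ∀ X ∈ P, 0 ≤ v X - CVaR X ∧ v X - CVaR X ≤ ς * max 1 (α / (1 - α)) := by
  obtain rfl : g = cvarDual μ α := funext fun X => funext (hg X)
  intro X hX
  obtain ⟨b₀, hb₀, hCVaR, hmin⟩ := hdual X hX
  obtain ⟨k, hk⟩ := exists_nat_add_mul_mem_Ioc hς hb₀.1
  have hgrid : Vmin + k * ς ∈ {b : ℝ | ∃ k : ℕ, b = Vmin + k * ς ∧ b ≤ Vmax} :=
    ⟨k, rfl, hk.2.trans hb₀.2⟩
  have hint : Integrable (fun ω => max (X ω - b₀) 0) μ :=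
    ((Integrable.of_mem_Icc Vmin Vmax (hmeas X hX).aemeasurable
      (.of_forall (hbound X hX))).sub (integrable_const b₀)).pos_part
  have hstep := cvarDual_le_add hα.2 hk.2 hint
  have hratio : 0 ≤ α / (1 - α) := div_nonneg hα.1.le (sub_nonneg.2 hα.2.le)
  obtain ⟨hlow, hup⟩ := csInf_image_mem_Icc hgrid fun b _ => hmin b
  rw [hv, ← hCVaR]
  refine ⟨sub_nonneg.2 hlow, ?_⟩
  calc _ ≤ α / (1 - α) * (b₀ - (Vmin + k * ς)) := by linarith
    _ ≤ α / (1 - α) * ς := by gcongr; linarith [hk.1]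
    _ ≤ ς * max 1 (α / (1 - α)) := by rw [mul_comm]; gcongr; exact le_max_right _ _

/-- Slack-variable discretization error for risk-sensitive DVI (Lemma 2
abstraction): for each bounded random variable `X` in a finite set `P`, the
approximate value `v_ς(X)`, obtained by minimizing the dual CVaR objective
`g X b = b + (1/(1-α)) E[(X-b)⁺]` over the finite grid
`B_ς = {Vmin + kς : k ∈ ℕ, Vmin + kς ≤ Vmax}`, overestimates `CVaR_α(X)` by at
most `ς · max 1 (α/(1-α))`. Here the dual representation of `CVaR` is assumed:
the minimum of `g X` over `ℝ` is attained at some `b* ∈ [Vmin, Vmax]` and equals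
`CVaR_α(X)`. -/
theorem grid_cvar_error {Ω : Type*} [MeasurableSpace Ω]
    (μ : Measure Ω) [IsProbabilityMeasure μ]
    (α : ℝ) (hα : α ∈ Set.Ioo (0 : ℝ) 1)
    (Vmin Vmax ς : ℝ) (hV : Vmin ≤ Vmax) (hς : 0 < ς)
    (P : Set (Ω → ℝ)) (hPfin : P.Finite)
    (hmeas : ∀ X ∈ P, Measurable X)
    (hbound : ∀ X ∈ P, ∀ ω, X ω ∈ Set.Icc Vmin Vmax)
    (g : (Ω → ℝ) → ℝ → ℝ)
    (hg : ∀ X b, g X b = b + (1 / (1 - α)) * ∫ ω, max (X ω - b) 0 ∂μ)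
    (CVaR : (Ω → ℝ) → ℝ)
    (hdual : ∀ X ∈ P, ∃ b ∈ Set.Icc Vmin Vmax,
        g X b = CVaR X ∧ ∀ b' : ℝ, g X b ≤ g X b')
    (v : (Ω → ℝ) → ℝ)
    (hv : ∀ X, v X = sInf (g X '' {b : ℝ | ∃ k : ℕ, b = Vmin + k * ς ∧ b ≤ Vmax})) :
    ∀ X ∈ P, 0 ≤ v X - CVaR X ∧ v X - CVaR X ≤ ς * max 1 (α / (1 - α)) :=
  grid_cvar_error_general μ α hα Vmin Vmax ς hς P hmeas hbound g hg CVaR hdual v hv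
end
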